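/- Let M be a compact subset of ℝ^D, let Y ⊂ ℝ^d, let μ be a probability measure on M, let ν be an absolutely continuous probability measure on Y, and let T : M → Y be an invertible Borel map with Borel inverse. Define c_T(x,y) = ‖T(x) − y‖²/2. Suppose R* : Y → Y is a Borel map with R*_#ν = T_#μ that attains W₂²(T_#μ, ν), i.e., ∫ ‖R*(y) − y‖²/2 dν(y) = W₂²(T_#μ, ν). Then G* := T^{-1} ∘ R* satisfies ∫ c_T(G*(y), y) dν(y) = OT_{c_T}(μ,ν); that is, G* is an optimal transport map for OT_{c_T}(μ,ν). -/

import Mathlib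

open MeasureTheory

noncomputable section

/-- `π` is a coupling of `μ` and `ν`. -/
def IsCoupling {X Y : Type*} [MeasurableSpace X] [MeasurableSpace Y]
    (π : Measure (X × Y)) (μ : Measure X) (ν : Measure Y) : Prop :=
  π.map Prod.fst = μ ∧ π.map Prod.snd = ν

/-- The optimal transport cost `OT_c(μ,ν) = inf_{π ∈ Π(μ,ν)} ∫ c(x,y) dπ`. -/
noncomputable def OTcost {X Y : Type*} [MeasurableSpace X] [MeasurableSpace Y]
    (c : X → Y → ℝ) (μ : Measure X) (ν : Measure Y) : ℝ :=
  sInf {r : ℝ | ∃ π : Measure (X × Y), IsCoupling π μ ν ∧ r = ∫ z, c z.1 z.2 ∂π}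

/-- The squared Wasserstein-2 distance
`W₂²(ρ,ν) = inf_{π ∈ Π(ρ,ν)} ∫ dist(y,z)²/2 dπ`. -/
noncomputable def W2sq {Z : Type*} [MeasurableSpace Z] [PseudoMetricSpace Z]
    (ρ ν : Measure Z) : ℝ :=
  sInf {r : ℝ | ∃ π : Measure (Z × Z), IsCoupling π ρ ν ∧
    r = ∫ z, dist z.1 z.2 ^ 2 / 2 ∂π}

/-!
Having a measurable left inverse, `T` is a measurable embedding, so `π ↦ (T × id)_# π` is a
bijection from the couplings of `(μ, ν)` onto those of `(T_# μ, ν)` (its inverse is the comap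
along `T × id`, every coupling of `(T_# μ, ν)` being carried by `range T × Y`), and it
transports the cost `c_T` to `‖y - z‖²/2`. Hence `OT_{c_T}(μ, ν) = W₂²(T_# μ, ν)`. Finally
`R*_# ν = T_# μ` lives on `range T`, where `T ∘ T⁻¹ = id`, so `c_T(G*(y), y) = ‖R*(y) - y‖²/2`
for `ν`-almost every `y`.
-/

open Set Function

lemma W2sq_eq_OTcost {Z : Type*} [MeasurableSpace Z] [PseudoMetricSpace Z] (ρ ν : Measure Z) :
    W2sq ρ ν = OTcost (fun y z => dist y z ^ 2 / 2) ρ ν :=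
  rfl

section CouplingTransport

variable {X Y Z : Type*} [MeasurableSpace X] [MeasurableSpace Y] [MeasurableSpace Z]
  {T : X → Z} {μ : Measure X} {ν : Measure Y}

lemma IsCoupling.map_prodMap_id {π : Measure (X × Y)} (hπ : IsCoupling π μ ν)
    (hT : Measurable T) : IsCoupling (π.map (Prod.map T id)) (μ.map T) ν := by
  have hTid : Measurable (Prod.map T (id : Y → Y)) := hT.prodMap measurable_id
  constructor
  · rw [Measure.map_map measurable_fst hTid, ← hπ.1, Measure.map_map hT measurable_fst]
    rfl
  · rw [Measure.map_map measurable_snd hTid, ← hπ.2]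
    rfl

lemma restrict_range_prodMap_id_eq_self {π : Measure (Z × Y)} (hT : MeasurableSet (range T))
    (hπ : π.map Prod.fst = μ.map T) : π.restrict (range (Prod.map T (id : Y → Y))) = π := by
  refine Measure.restrict_eq_self_of_ae_mem ?_
  have hfst : ∀ᵐ z ∂π, z.1 ∈ range T :=
    ae_of_ae_map measurable_fst.aemeasurable (hπ ▸ ae_map_mem_range T hT μ)
  filter_upwards [hfst] with z hz
  rw [range_prodMap, range_id]
  exact ⟨hz, mem_univ _⟩

lemma IsCoupling.comap_prodMap_id {π : Measure (Z × Y)} (hπ : IsCoupling π (μ.map T) ν)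
    (hT : MeasurableEmbedding T) : IsCoupling (π.comap (Prod.map T id)) μ ν := by
  have hTid : MeasurableEmbedding (Prod.map T (id : Y → Y)) := hT.prodMap .id
  have hpush : (π.comap (Prod.map T id)).map (Prod.map T id) = π := by
    rw [hTid.map_comap, restrict_range_prodMap_id_eq_self hT.measurableSet_range hπ.1]
  constructor
  · rw [← hT.comap_map ((π.comap (Prod.map T id)).map Prod.fst),
      Measure.map_map hT.measurable measurable_fst]
    change ((π.comap (Prod.map T id)).map (Prod.fst ∘ Prod.map T id)).comap T = μ
    rw [← Measure.map_map measurable_fst hTid.measurable, hpush, hπ.1, hT.comap_map]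
  · change (π.comap (Prod.map T id)).map (Prod.snd ∘ Prod.map T id) = ν
    rw [← Measure.map_map measurable_snd hTid.measurable, hpush, hπ.2]

theorem OTcost_comp_left (hT : MeasurableEmbedding T) (c : Z → Y → ℝ) :
    OTcost (fun x y => c (T x) y) μ ν = OTcost c (μ.map T) ν := by
  have hTid : MeasurableEmbedding (Prod.map T (id : Y → Y)) := hT.prodMap .id
  have hcost (π : Measure (X × Y)) :
      ∫ z, c (T z.1) z.2 ∂π = ∫ z, c z.1 z.2 ∂(π.map (Prod.map T id)) :=
    (hTid.integral_map (fun z : Z × Y => c z.1 z.2) (μ := π)).symm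
  unfold OTcost
  congr 1
  ext r
  constructor
  · rintro ⟨π, hπ, rfl⟩
    exact ⟨_, hπ.map_prodMap_id hT.measurable, hcost π⟩
  · rintro ⟨π, hπ, rfl⟩
    refine ⟨_, hπ.comap_prodMap_id hT, ?_⟩
    rw [hcost, hTid.map_comap, restrict_range_prodMap_id_eq_self hT.measurableSet_range hπ.1]

end CouplingTransport

lemma Function.LeftInverse.measurableSet_range {α β : Type*} [MeasurableSpace α]
    [MeasurableSpace β] [MeasurableEq β] {f : α → β} {g : β → α} (h : LeftInverse g f)
    (hf : Measurable f) (hg : Measurable g) : MeasurableSet (range f) := by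
  have hrange : range f = {y | f (g y) = y} :=
    ext fun y => ⟨by rintro ⟨x, rfl⟩; exact congrArg f (h x), fun hy => ⟨g y, hy⟩⟩
  rw [hrange]
  exact measurableSet_eq_fun (hf.comp hg) measurable_id

theorem inv_comp_optimal_map_general {D d : ℕ}
    (M : Set (EuclideanSpace ℝ (Fin D)))
    (Y : Set (EuclideanSpace ℝ (Fin d)))
    (μ : Measure M) (ν : Measure Y)
    (T : M → Y) (hTm : Measurable T)
    (Tinv : Y → M) (hTinvm : Measurable Tinv)
    (hTinv : Function.LeftInverse Tinv T)
    (Rstar : Y → Y) (hRm : Measurable Rstar)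
    (hRpush : ν.map Rstar = μ.map T)
    (hRopt : ∫ y, dist (Rstar y) y ^ 2 / 2 ∂ν = W2sq (μ.map T) ν) :
    ∫ y, dist (T ((Tinv ∘ Rstar) y)) y ^ 2 / 2 ∂ν
      = OTcost (fun (x : M) (y : Y) => dist (T x) y ^ 2 / 2) μ ν := by
  have hrange : MeasurableSet (range T) := hTinv.measurableSet_range hTm hTinvm
  have hT : MeasurableEmbedding T := .of_measurable_inverse hTm hrange hTinvm hTinv
  have hRT : ∀ᵐ y ∂ν, T (Tinv (Rstar y)) = Rstar y := by
    have hmem : ∀ᵐ y ∂ν, Rstar y ∈ range T :=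
      ae_of_ae_map hRm.aemeasurable (hRpush ▸ ae_map_mem_range T hrange μ)
    filter_upwards [hmem] with y hy
    exact hTinv.rightInvOn_range hy
  calc ∫ y, dist (T ((Tinv ∘ Rstar) y)) y ^ 2 / 2 ∂ν
      = ∫ y, dist (Rstar y) y ^ 2 / 2 ∂ν :=
        integral_congr_ae (hRT.mono fun y hy => by simp only [comp_apply, hy])
    _ = OTcost (fun (x : M) (y : Y) => dist (T x) y ^ 2 / 2) μ ν := by
        rw [hRopt, W2sq_eq_OTcost]
        exact (OTcost_comp_left hT (fun y z => dist y z ^ 2 / 2)).symm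

/-- if `R* : Y → Y` pushes `ν` to `T_#μ` and attains `W₂²(T_#μ, ν)`, then
`G* := T⁻¹ ∘ R*` attains the optimal transport cost `OT_{c_T}(μ,ν)`, where
`c_T(x,y) = ‖T(x) - y‖²/2` and `Tinv` is the Borel inverse of the invertible Borel map
`T`. -/
theorem inv_comp_optimal_map {D d : ℕ}
    (M : Set (EuclideanSpace ℝ (Fin D))) (hM : IsCompact M)
    (Y : Set (EuclideanSpace ℝ (Fin d)))
    (μ : Measure M) (ν : Measure Y)
    [IsProbabilityMeasure μ] [IsProbabilityMeasure ν]
    (hνac : ν.map (Subtype.val : Y → EuclideanSpace ℝ (Fin d)) ≪ volume)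
    (T : M → Y) (hTm : Measurable T)
    (Tinv : Y → M) (hTinvm : Measurable Tinv)
    (hTinv : Function.LeftInverse Tinv T)
    (Rstar : Y → Y) (hRm : Measurable Rstar)
    (hRpush : ν.map Rstar = μ.map T)
    (hRopt : ∫ y, dist (Rstar y) y ^ 2 / 2 ∂ν = W2sq (μ.map T) ν) :
    ∫ y, dist (T ((Tinv ∘ Rstar) y)) y ^ 2 / 2 ∂ν
      = OTcost (fun (x : M) (y : Y) => dist (T x) y ^ 2 / 2) μ ν :=
  inv_comp_optimal_map_general M Y μ ν T hTm Tinv hTinvm hTinv Rstar hRm hRpush hRopt
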